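/- Let 0 ≤ α < 1 and let ω_α ∈ M_α. Then there exists a constant K > 0 such that for every natural number M ≥ 0, Σ_{m=0}^{M} 2^m·ω_α(2^{−m}) ≤ K·2^M·ω_α(2^{−M}). -/

import Mathlib

/-- A modulus of continuity: continuous, nondecreasing, subadditive on `[0,∞)`,
vanishing at `0`. -/
def IsModulus (ω : ℝ → ℝ) : Prop :=
  ContinuousOn ω (Set.Ici 0) ∧ ω 0 = 0 ∧
  (∀ s t : ℝ, 0 ≤ s → s ≤ t → ω s ≤ ω t) ∧
  (∀ s t : ℝ, 0 ≤ s → 0 ≤ t → ω (s + t) ≤ ω s + ω t)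

/-- Leindler's class `M_α` of moduli of continuity. -/
def MemMClass (α : ℝ) (ω : ℝ → ℝ) : Prop :=
  IsModulus ω ∧
  (∀ α' : ℝ, α < α' → ∃ μ : ℕ, 1 ≤ μ ∧ ∀ n : ℕ, 1 ≤ n →
    2 * ω (1 / 2 ^ n) < (2:ℝ) ^ ((μ:ℝ) * α') * ω (1 / 2 ^ (n + μ))) ∧
  (∀ ν : ℕ, 1 ≤ ν → ∃ N : ℕ, ∀ n : ℕ, N < n →
    (2:ℝ) ^ ((ν:ℝ) * α) * ω (1 / 2 ^ (n + ν)) < 2 * ω (1 / 2 ^ n))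

/-!
With `a m = 2^m ω(2^{-m})`, subadditivity makes `a` nondecreasing, and condition (i) of `M_α`
with `α' = 1` gives `μ` with `2 a n ≤ a (n + μ)` for `n ≥ 1`. Splitting off the last `μ` terms,
`Σ_{m ≤ n+μ} a m ≤ Σ_{m ≤ n} a m + μ a (n+μ)`, and by strong induction the first sum is at most
`2(μ+1) a n ≤ (μ+1) a (n+μ)`, so `K = 2(μ + 1)` works.
-/

open Finset

theorem sum_range_succ_le_of_monotone_of_doubling {a : ℕ → ℝ} {μ : ℕ} (hμ : 0 < μ)
    (ha : ∀ n, 0 ≤ a n) (hmono : Monotone a) (hdouble : ∀ n, 1 ≤ n → 2 * a n ≤ a (n + μ))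
    (M : ℕ) : ∑ m ∈ range (M + 1), a m ≤ 2 * (μ + 1) * a M := by
  induction M using Nat.strong_induction_on with
  | _ M ih =>
    rcases le_or_gt M μ with hM | hM
    · have hcard : ((M : ℝ) + 1) ≤ μ + 1 := by exact_mod_cast Nat.succ_le_succ hM
      calc ∑ m ∈ range (M + 1), a m ≤ ∑ _m ∈ range (M + 1), a M :=
            sum_le_sum fun m hm => hmono (Nat.lt_succ_iff.mp (mem_range.mp hm))
        _ = ((M : ℝ) + 1) * a M := by simp
        _ ≤ 2 * (μ + 1) * a M := by nlinarith [ha M]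
    · obtain ⟨n, rfl⟩ : ∃ n, M = n + μ := ⟨M - μ, by omega⟩
      have htail : ∑ i ∈ range μ, a (n + 1 + i) ≤ μ * a (n + μ) := by
        calc ∑ i ∈ range μ, a (n + 1 + i) ≤ ∑ _i ∈ range μ, a (n + μ) :=
              sum_le_sum fun i hi => hmono (by have := mem_range.mp hi; omega)
          _ = μ * a (n + μ) := by simp
      have hhead := ih n (by omega)
      have hgrow := hdouble n (by omega)
      calc ∑ m ∈ range (n + μ + 1), a m
          = ∑ m ∈ range (n + 1), a m + ∑ i ∈ range μ, a (n + 1 + i) := by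
            rw [← sum_range_add, Nat.add_right_comm]
        _ ≤ 2 * (μ + 1) * a n + μ * a (n + μ) := add_le_add hhead htail
        _ ≤ 2 * (μ + 1) * a (n + μ) := by nlinarith [ha (n + μ)]

namespace IsModulus

variable {ω : ℝ → ℝ}

theorem nonneg (hω : IsModulus ω) {t : ℝ} (ht : 0 ≤ t) : 0 ≤ ω t :=
  hω.2.1 ▸ hω.2.2.1 0 t le_rfl ht

theorem le_two_mul (hω : IsModulus ω) {t : ℝ} (ht : 0 ≤ t) : ω (2 * t) ≤ 2 * ω t := by
  simpa [two_mul] using hω.2.2.2 t t ht ht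

theorem monotone_two_pow_mul (hω : IsModulus ω) :
    Monotone fun m : ℕ => (2 : ℝ) ^ m * ω (1 / 2 ^ m) := by
  refine monotone_nat_of_le_succ fun m => ?_
  have hhalf : (1 : ℝ) / 2 ^ m = 2 * (1 / 2 ^ (m + 1)) := by
    rw [pow_succ]; field_simp
  calc (2 : ℝ) ^ m * ω (1 / 2 ^ m) ≤ 2 ^ m * (2 * ω (1 / 2 ^ (m + 1))) := by
        rw [hhalf]; gcongr; exact hω.le_two_mul (by positivity)
    _ = 2 ^ (m + 1) * ω (1 / 2 ^ (m + 1)) := by ring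

end IsModulus

theorem MemMClass.exists_doubling {α : ℝ} {ω : ℝ → ℝ} (hω : MemMClass α ω) (hα : α < 1) :
    ∃ μ : ℕ, 0 < μ ∧ ∀ n : ℕ, 1 ≤ n →
      2 * ((2 : ℝ) ^ n * ω (1 / 2 ^ n)) ≤ 2 ^ (n + μ) * ω (1 / 2 ^ (n + μ)) := by
  obtain ⟨μ, hμ, hgrow⟩ := hω.2.1 1 hα
  refine ⟨μ, hμ, fun n hn => ?_⟩
  have h := (hgrow n hn).le
  rw [mul_one, Real.rpow_natCast] at h
  calc 2 * ((2 : ℝ) ^ n * ω (1 / 2 ^ n)) = 2 ^ n * (2 * ω (1 / 2 ^ n)) := by ring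
    _ ≤ 2 ^ n * (2 ^ μ * ω (1 / 2 ^ (n + μ))) := by gcongr
    _ = 2 ^ (n + μ) * ω (1 / 2 ^ (n + μ)) := by ring

theorem geometric_weighted_sum_bound_general
    (α : ℝ) (hα1 : α < 1)
    (ωα : ℝ → ℝ) (hωα : MemMClass α ωα) :
    ∃ K : ℝ, 0 < K ∧ ∀ M : ℕ,
      ∑ m ∈ Finset.range (M + 1), (2:ℝ) ^ m * ωα (1 / 2 ^ m) ≤
        K * ((2:ℝ) ^ M * ωα (1 / 2 ^ M)) := by
  obtain ⟨μ, hμ, hdouble⟩ := hωα.exists_doubling hα1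
  refine ⟨2 * (μ + 1), by positivity, ?_⟩
  exact sum_range_succ_le_of_monotone_of_doubling hμ
    (fun m => mul_nonneg (by positivity) (hωα.1.nonneg (by positivity)))
    hωα.1.monotone_two_pow_mul hdouble

/-- For `0 ≤ α < 1` and `ω_α ∈ M_α`:
`Σ_{m=0}^{M} 2^m ω_α(2^{-m}) ≤ K 2^M ω_α(2^{-M})`. -/
theorem geometric_weighted_sum_bound
    (α : ℝ) (hα0 : 0 ≤ α) (hα1 : α < 1)
    (ωα : ℝ → ℝ) (hωα : MemMClass α ωα) :
    ∃ K : ℝ, 0 < K ∧ ∀ M : ℕ,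
      ∑ m ∈ Finset.range (M + 1), (2:ℝ) ^ m * ωα (1 / 2 ^ m) ≤
        K * ((2:ℝ) ^ M * ωα (1 / 2 ^ M)) :=
  geometric_weighted_sum_bound_general α hα1 ωα hωα
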